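/- Let p ≥ 1 be a real number, φ = π/(2p + 2), s = sin φ, and s_j = sin(jφ) for integers j. For integers r ≥ 1 define the 2×2 real matrices A_r = [[0, −s/s_{r+1}], [0, 0]], B_r = [[−s_{r+1}/s_r, 0], [0, −s_r/s_{r+1}]], D_r = [[0, 0], [s/s_r, 0]], P⁺_r = [[1, 0], [0, s_r/s_{r+1}]], P⁻_r = [[−s_{r+1}/s_r, 0], [0, −1]]. Then for every integer r with 1 ≤ r ≤ 2p − 1 the DN equations on [r, r+1] hold: P⁻_{r+1}·A_{r+1} = A_r·P⁻_{r+1}, P⁺_r·D_r = D_{r+1}·P⁺_r, B_r = P⁻_{r+1}·P⁺_r + A_r·D_r, and B_{r+1} = P⁺_r·P⁻_{r+1} + D_{r+1}·A_{r+1}. -/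

import Mathlib

open Matrix

/-- `s_j = sin (j·φ)` with `φ = π/(2p+2)`. -/
noncomputable def sj (p : ℝ) (j : ℕ) : ℝ := Real.sin (j * (Real.pi / (2 * p + 2)))

noncomputable def trigA (p : ℝ) (r : ℕ) : Matrix (Fin 2) (Fin 2) ℝ :=
  !![0, -(sj p 1) / sj p (r + 1); 0, 0]

noncomputable def trigB (p : ℝ) (r : ℕ) : Matrix (Fin 2) (Fin 2) ℝ :=
  !![-(sj p (r + 1)) / sj p r, 0; 0, -(sj p r) / sj p (r + 1)]

noncomputable def trigD (p : ℝ) (r : ℕ) : Matrix (Fin 2) (Fin 2) ℝ :=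
  !![0, 0; sj p 1 / sj p r, 0]

noncomputable def trigPp (p : ℝ) (r : ℕ) : Matrix (Fin 2) (Fin 2) ℝ :=
  !![1, 0; 0, sj p r / sj p (r + 1)]

noncomputable def trigPm (p : ℝ) (r : ℕ) : Matrix (Fin 2) (Fin 2) ℝ :=
  !![-(sj p (r + 1)) / sj p r, 0; 0, -1]

/-!
Every entry of the four DN equations is a rational identity in `s = s₁, s_r, s_{r+1}, s_{r+2}`.
The only non-trivial ones are the diagonal entries of the `B`-equations, which reduce to
`s_r s_{r+2} + s² = s_{r+1}²`, i.e. `sin a · sin (a + 2b) + sin² b = sin² (a + b)`; the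
denominators do not vanish because `0 < jφ < π` for `1 ≤ j ≤ 2p + 1`.
-/

theorem Real.sin_mul_sin_add_two_mul_add_sin_sq (a b : ℝ) :
    Real.sin a * Real.sin (a + 2 * b) + Real.sin b ^ 2 = Real.sin (a + b) ^ 2 := by
  rw [show a + 2 * b = (a + b) + b by ring, Real.sin_add (a + b) b, Real.sin_add a b,
    Real.cos_add a b]
  linear_combination (-Real.sin b ^ 2) * Real.sin_sq_add_cos_sq a

lemma sj_mul_sj_add_two_add_sq (p : ℝ) (r : ℕ) :
    sj p r * sj p (r + 2) + sj p 1 ^ 2 = sj p (r + 1) ^ 2 := by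
  simp only [sj]
  push_cast
  rw [add_mul, add_mul, one_mul, mul_comm 2]
  exact Real.sin_mul_sin_add_two_mul_add_sin_sq _ _

lemma sj_pos {p : ℝ} {j : ℕ} (hj : 0 < j) (hjp : (j : ℝ) < 2 * p + 2) : 0 < sj p j := by
  have hj' : (0 : ℝ) < j := by exact_mod_cast hj
  have hden : 0 < 2 * p + 2 := hj'.trans hjp
  apply Real.sin_pos_of_pos_of_lt_pi (by positivity)
  calc (j : ℝ) * (Real.pi / (2 * p + 2)) = Real.pi * (j / (2 * p + 2)) := by ring
    _ < Real.pi * 1 := by gcongr; exact (div_lt_one hden).mpr hjp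
    _ = Real.pi := mul_one _

theorem Matrix.of_fin_two_eq_of_fin_two_iff {α : Type*} {a b c d a' b' c' d' : α} :
    !![a, b; c, d] = !![a', b'; c', d'] ↔ a = a' ∧ b = b' ∧ c = c' ∧ d = d' := by
  simp [and_assoc]

theorem Matrix.add_fin_two {α : Type*} [Add α] (a b c d a' b' c' d' : α) :
    !![a, b; c, d] + !![a', b'; c', d'] = !![a + a', b + b'; c + c', d + d'] := by
  ext i j
  fin_cases i <;> fin_cases j <;> rfl

section DNEquations

variable {p : ℝ} {r : ℕ}

lemma trigPm_succ_mul_trigA_succ (hc : sj p (r + 2) ≠ 0) :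
    trigPm p (r + 1) * trigA p (r + 1) = trigA p r * trigPm p (r + 1) := by
  rw [trigPm, trigA, trigA, mul_fin_two, mul_fin_two, of_fin_two_eq_of_fin_two_iff]
  refine ⟨by ring, ?_, by ring, by ring⟩
  field_simp
  ring

lemma trigPp_mul_trigD (ha : sj p r ≠ 0) :
    trigPp p r * trigD p r = trigD p (r + 1) * trigPp p r := by
  rw [trigPp, trigD, trigD, mul_fin_two, mul_fin_two, of_fin_two_eq_of_fin_two_iff]
  refine ⟨by ring, by ring, ?_, by ring⟩
  field_simp
  ring

lemma trigB_eq_trigPm_succ_mul_trigPp_add_trigA_mul_trigD (ha : sj p r ≠ 0)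
    (hb : sj p (r + 1) ≠ 0) :
    trigB p r = trigPm p (r + 1) * trigPp p r + trigA p r * trigD p r := by
  rw [trigB, trigPm, trigPp, trigA, trigD, mul_fin_two, mul_fin_two, add_fin_two,
    of_fin_two_eq_of_fin_two_iff]
  refine ⟨?_, by ring, by ring, by ring⟩
  field_simp
  linear_combination sj_mul_sj_add_two_add_sq p r

lemma trigB_succ_eq_trigPp_mul_trigPm_succ_add_trigD_succ_mul_trigA_succ
    (hb : sj p (r + 1) ≠ 0) (hc : sj p (r + 2) ≠ 0) :
    trigB p (r + 1) = trigPp p r * trigPm p (r + 1) + trigD p (r + 1) * trigA p (r + 1) := by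
  rw [trigB, trigPm, trigPp, trigA, trigD, mul_fin_two, mul_fin_two, add_fin_two,
    of_fin_two_eq_of_fin_two_iff]
  refine ⟨by ring, by ring, by ring, ?_⟩
  field_simp
  linear_combination sj_mul_sj_add_two_add_sq p r

end DNEquations

theorem stmt17_general (p : ℝ) :
    ∀ r : ℕ, 1 ≤ r → (r : ℝ) ≤ 2 * p - 1 →
      trigPm p (r + 1) * trigA p (r + 1) = trigA p r * trigPm p (r + 1) ∧
      trigPp p r * trigD p r = trigD p (r + 1) * trigPp p r ∧
      trigB p r = trigPm p (r + 1) * trigPp p r + trigA p r * trigD p r ∧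
      trigB p (r + 1) = trigPp p r * trigPm p (r + 1) + trigD p (r + 1) * trigA p (r + 1) := by
  intro r hr hrp
  have hsj : ∀ j, 0 < j → j ≤ r + 2 → sj p j ≠ 0 := fun j hj hjr ↦ by
    have : (j : ℝ) ≤ r + 2 := by exact_mod_cast hjr
    exact (sj_pos hj (by linarith)).ne'
  have ha := hsj r hr (by omega)
  have hb := hsj (r + 1) r.succ_pos (by omega)
  have hc := hsj (r + 2) (by omega) le_rfl
  exact ⟨trigPm_succ_mul_trigA_succ hc, trigPp_mul_trigD ha,
    trigB_eq_trigPm_succ_mul_trigPp_add_trigA_mul_trigD ha hb,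
    trigB_succ_eq_trigPp_mul_trigPm_succ_add_trigD_succ_mul_trigA_succ hb hc⟩

theorem stmt17 (p : ℝ) (hp : 1 ≤ p) :
    ∀ r : ℕ, 1 ≤ r → (r : ℝ) ≤ 2 * p - 1 →
      trigPm p (r + 1) * trigA p (r + 1) = trigA p r * trigPm p (r + 1) ∧
      trigPp p r * trigD p r = trigD p (r + 1) * trigPp p r ∧
      trigB p r = trigPm p (r + 1) * trigPp p r + trigA p r * trigD p r ∧
      trigB p (r + 1) = trigPp p r * trigPm p (r + 1) + trigD p (r + 1) * trigA p (r + 1) :=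
  stmt17_general p
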